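/- Let k ∈ ℝ and let h : ℝ² → ℝ be C³ on ℝ² \ {0} and positively homogeneous of degree k. Let v ≠ 0 with K₂(h)(v) ≠ 0. Then for every t > 0: J₃(h)(t • v) = t^(−k) · J₃(h)(v), where J₃(h) = K₃(h)²/K₂(h)³. (This is the statement that the radial field δ̂ acts on the invariant J₃ by δ̂(J₃) = −k·J₃.) -/

import Mathlib

/-- First partial derivative of `h : ℝ² → ℝ` in the `i`-th coordinate direction. -/
noncomputable def pd1 (h : (Fin 2 → ℝ) → ℝ) (i : Fin 2) (x : Fin 2 → ℝ) : ℝ :=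
  fderiv ℝ h x (Pi.single i 1)

/-- Second partial derivative of `h : ℝ² → ℝ`. -/
noncomputable def pd2 (h : (Fin 2 → ℝ) → ℝ) (i j : Fin 2) (x : Fin 2 → ℝ) : ℝ :=
  iteratedFDeriv ℝ 2 h x ![Pi.single i 1, Pi.single j 1]

/-- Third partial derivative of `h : ℝ² → ℝ`. -/
noncomputable def pd3 (h : (Fin 2 → ℝ) → ℝ) (i j m : Fin 2) (x : Fin 2 → ℝ) : ℝ :=
  iteratedFDeriv ℝ 3 h x ![Pi.single i 1, Pi.single j 1, Pi.single m 1]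

/-- `K₂(h) = (1/2)(h₁₁h₂² − 2h₁₂h₁h₂ + h₂₂h₁²)`. -/
noncomputable def K2 (h : (Fin 2 → ℝ) → ℝ) (x : Fin 2 → ℝ) : ℝ :=
  (1 / 2) * (pd2 h 0 0 x * (pd1 h 1 x) ^ 2 - 2 * pd2 h 0 1 x * pd1 h 0 x * pd1 h 1 x +
    pd2 h 1 1 x * (pd1 h 0 x) ^ 2)

/-- `K₃(h) = (1/6)(h₁₁₁h₂³ − 3h₁₁₂h₂²h₁ + 3h₁₂₂h₂h₁² − h₂₂₂h₁³)`. -/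
noncomputable def K3 (h : (Fin 2 → ℝ) → ℝ) (x : Fin 2 → ℝ) : ℝ :=
  (1 / 6) * (pd3 h 0 0 0 x * (pd1 h 1 x) ^ 3 -
    3 * pd3 h 0 0 1 x * (pd1 h 1 x) ^ 2 * pd1 h 0 x +
    3 * pd3 h 0 1 1 x * pd1 h 1 x * (pd1 h 0 x) ^ 2 -
    pd3 h 1 1 1 x * (pd1 h 0 x) ^ 3)

/-- The invariant `J₃(h) = K₃(h)²/K₂(h)³`. -/
noncomputable def J3 (h : (Fin 2 → ℝ) → ℝ) (x : Fin 2 → ℝ) : ℝ :=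
  (K3 h x) ^ 2 / (K2 h x) ^ 3

/-! Near `v ≠ 0` the identity `h ∘ (t • ·) = (t ^ k • ·) ∘ h` holds, and composing with a
continuous linear equivalence on either side commutes with iterated derivatives (no
differentiability needed), so the `n`-th derivative of `h` scales by `t ^ k / t ^ n`.
Hence `K₂` and `K₃` scale by `t ^ (3k - 4)` and `t ^ (4k - 6)`, and `J₃ = K₃² / K₂³` by
`t ^ (8k - 12 - (9k - 12)) = t ^ (-k)`. -/

open Filter Topology

theorem ContinuousLinearEquiv.iteratedFDeriv_comp_right {𝕜 E F G : Type*}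
    [NontriviallyNormedField 𝕜] [NormedAddCommGroup E] [NormedSpace 𝕜 E]
    [NormedAddCommGroup F] [NormedSpace 𝕜 F] [NormedAddCommGroup G] [NormedSpace 𝕜 G]
    (g : G ≃L[𝕜] E) (f : E → F) (x : G) (n : ℕ) :
    iteratedFDeriv 𝕜 n (f ∘ g) x =
      (iteratedFDeriv 𝕜 n f (g x)).compContinuousLinearMap fun _ => g := by
  simpa only [← iteratedFDerivWithin_univ, Set.preimage_univ] using
    g.iteratedFDerivWithin_comp_right f uniqueDiffOn_univ (Set.mem_univ (g x)) n

theorem iteratedFDeriv_smul_of_homogeneous {E F : Type*} [NormedAddCommGroup E]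
    [NormedSpace ℝ E] [NormedAddCommGroup F] [NormedSpace ℝ F] {k : ℝ} {h : E → F}
    (hhom : ∀ t : ℝ, 0 < t → ∀ x : E, x ≠ 0 → h (t • x) = t ^ k • h x)
    {x : E} (hx : x ≠ 0) {t : ℝ} (ht : 0 < t) (n : ℕ) (m : Fin n → E) :
    iteratedFDeriv ℝ n h (t • x) m = (t ^ k / t ^ n) • iteratedFDeriv ℝ n h x m := by
  let g : E ≃L[ℝ] E := .smulLeft (Units.mk0 t ht.ne')
  let c : F ≃L[ℝ] F := .smulLeft (Units.mk0 (t ^ k) (Real.rpow_pos_of_pos ht k).ne')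
  have hloc : h ∘ g =ᶠ[𝓝 x] c ∘ h := by
    filter_upwards [isOpen_ne.mem_nhds hx] with y hy using hhom t ht y hy
  have hD := congr($((hloc.iteratedFDeriv ℝ n).eq_of_nhds) m)
  rw [g.iteratedFDeriv_comp_right, c.iteratedFDeriv_comp_left] at hD
  simp only [ContinuousLinearEquiv.smulLeft_apply_apply, Units.smul_mk0,
    ContinuousMultilinearMap.compContinuousLinearMap_apply, ContinuousLinearEquiv.coe_coe,
    ContinuousMultilinearMap.map_smul_univ, Finset.prod_const, Finset.card_univ,
    Fintype.card_fin, ContinuousLinearMap.compContinuousMultilinearMap_coe,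
    Function.comp_apply, g, c] at hD
  rw [div_eq_inv_mul, mul_smul, ← hD, smul_smul, inv_mul_cancel₀ (pow_ne_zero _ ht.ne'),
    one_smul]

section ScalingOfPartialDerivatives

variable {k : ℝ} {h : (Fin 2 → ℝ) → ℝ} {v : Fin 2 → ℝ} {t : ℝ}

theorem pd1_smul (hhom : ∀ t : ℝ, 0 < t → ∀ x : Fin 2 → ℝ, x ≠ 0 → h (t • x) = t ^ k * h x)
    (hv : v ≠ 0) (ht : 0 < t) (i : Fin 2) : pd1 h i (t • v) = t ^ k / t * pd1 h i v := by
  simpa [pd1, iteratedFDeriv_one_apply] using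
    iteratedFDeriv_smul_of_homogeneous hhom hv ht 1 fun _ => Pi.single i 1

theorem pd2_smul (hhom : ∀ t : ℝ, 0 < t → ∀ x : Fin 2 → ℝ, x ≠ 0 → h (t • x) = t ^ k * h x)
    (hv : v ≠ 0) (ht : 0 < t) (i j : Fin 2) :
    pd2 h i j (t • v) = t ^ k / t ^ 2 * pd2 h i j v :=
  iteratedFDeriv_smul_of_homogeneous hhom hv ht 2 _

theorem pd3_smul (hhom : ∀ t : ℝ, 0 < t → ∀ x : Fin 2 → ℝ, x ≠ 0 → h (t • x) = t ^ k * h x)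
    (hv : v ≠ 0) (ht : 0 < t) (i j l : Fin 2) :
    pd3 h i j l (t • v) = t ^ k / t ^ 3 * pd3 h i j l v :=
  iteratedFDeriv_smul_of_homogeneous hhom hv ht 3 _

theorem K2_smul (hhom : ∀ t : ℝ, 0 < t → ∀ x : Fin 2 → ℝ, x ≠ 0 → h (t • x) = t ^ k * h x)
    (hv : v ≠ 0) (ht : 0 < t) : K2 h (t • v) = (t ^ k) ^ 3 / t ^ 4 * K2 h v := by
  simp only [K2, pd1_smul hhom hv ht, pd2_smul hhom hv ht]
  field_simp

theorem K3_smul (hhom : ∀ t : ℝ, 0 < t → ∀ x : Fin 2 → ℝ, x ≠ 0 → h (t • x) = t ^ k * h x)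
    (hv : v ≠ 0) (ht : 0 < t) : K3 h (t • v) = (t ^ k) ^ 4 / t ^ 6 * K3 h v := by
  simp only [K3, pd1_smul hhom hv ht, pd3_smul hhom hv ht]
  field_simp

end ScalingOfPartialDerivatives

theorem J3_radial_homogeneity_general (k : ℝ) (h : (Fin 2 → ℝ) → ℝ)
    (hhom : ∀ t : ℝ, 0 < t → ∀ x : Fin 2 → ℝ, x ≠ 0 → h (t • x) = t ^ k * h x)
    (v : Fin 2 → ℝ) (hv : v ≠ 0) :
    ∀ t : ℝ, 0 < t → J3 h (t • v) = t ^ (-k) * J3 h v := by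
  intro t ht
  rw [J3, J3, K2_smul hhom hv ht, K3_smul hhom hv ht, Real.rpow_neg ht.le]
  field_simp

/-- For `h : ℝ² → ℝ` of class `C³` away from the origin and positively homogeneous of degree
`k`, the invariant `J₃ = K₃²/K₂³` is positively homogeneous of degree `−k`:
`J₃(h)(t•v) = t^(−k)·J₃(h)(v)` (i.e. `δ̂(J₃) = −k·J₃`). -/
theorem J3_radial_homogeneity (k : ℝ) (h : (Fin 2 → ℝ) → ℝ)
    (hf : ContDiffOn ℝ 3 h {x | x ≠ 0})
    (hhom : ∀ t : ℝ, 0 < t → ∀ x : Fin 2 → ℝ, x ≠ 0 → h (t • x) = t ^ k * h x)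
    (v : Fin 2 → ℝ) (hv : v ≠ 0) (hK2 : K2 h v ≠ 0) :
    ∀ t : ℝ, 0 < t → J3 h (t • v) = t ^ (-k) * J3 h v :=
  J3_radial_homogeneity_general k h hhom v hv
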